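/- Let A be a 2×2 real symmetric matrix with det A = 1 satisfying the uniform ellipticity condition (1/K)|ξ|² ≤ ⟨Aξ,ξ⟩ ≤ K|ξ|² for all ξ ∈ ℝ², where 1 ≤ K < ∞. Define the complex number μ = (a₂₂ − a₁₁ − 2i·a₁₂)/det(I + A). Then |μ| ≤ (K−1)/(K+1) < 1. -/

import Mathlib

set_option maxHeartbeats 1000000 in
/-- For a 2×2 real symmetric matrix A = (aₖₗ) with det A = 1 satisfying the
uniform ellipticity condition with constant K ≥ 1, the complex dilatation
μ = (a₂₂ − a₁₁ − 2i a₁₂)/det(I+A) satisfies |μ| ≤ (K−1)/(K+1) < 1. -/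
theorem complex_dilatation_bound (a11 a12 a22 K : ℝ) (hK : 1 ≤ K)
    (hdet : a11 * a22 - a12 ^ 2 = 1)
    (hell : ∀ x y : ℝ,
      (1 / K) * (x ^ 2 + y ^ 2) ≤ a11 * x ^ 2 + 2 * a12 * x * y + a22 * y ^ 2 ∧
      a11 * x ^ 2 + 2 * a12 * x * y + a22 * y ^ 2 ≤ K * (x ^ 2 + y ^ 2)) :
    ‖((a22 : ℂ) - (a11 : ℂ) - 2 * Complex.I * (a12 : ℂ)) /
        (((1 + a11) * (1 + a22) - a12 ^ 2 : ℝ) : ℂ)‖ ≤ (K - 1) / (K + 1) ∧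
      (K - 1) / (K + 1) < 1 := by
  have hKpos : (0:ℝ) < K := by linarith
  have h10 := hell 1 0
  have h01 := hell 0 1
  have h11 := (hell 1 1).1
  have h1m1 := (hell 1 (-1)).1
  have hu : 0 ≤ K - a11 := by nlinarith [h10.2]
  have hv : 0 ≤ K - a22 := by nlinarith [h01.2]
  have ha11 : 1 / K ≤ a11 := by nlinarith [h10.1]
  have ha22 : 1 / K ≤ a22 := by nlinarith [h01.1]
  have hainv : (0:ℝ) < 1 / K := by positivity
  have haux1 := (hell a12 (K - a11)).2
  have haux2 := (hell (K - a22) a12).2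
  have hA : 0 ≤ (K - a11) * ((K - a11) * (K - a22) - a12 ^ 2) := by nlinarith [haux1]
  have hB : 0 ≤ (K - a22) * ((K - a11) * (K - a22) - a12 ^ 2) := by nlinarith [haux2]
  -- key: (K - a11)(K - a22) ≥ a12 ^ 2
  have hkey : a12 ^ 2 ≤ (K - a11) * (K - a22) := by
    rcases eq_or_lt_of_le (add_nonneg hu hv) with h0 | hpos
    · have e1 : K - a11 = 0 := by linarith
      have e2 : K - a22 = 0 := by linarith
      have ea1 : a11 = K := by linarith
      have ea2 : a22 = K := by linarith
      have ha12sq : a12 ^ 2 = K ^ 2 - 1 := by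
        rw [ea1, ea2] at hdet; nlinarith [hdet]
      have hm1 := mul_le_mul_of_nonneg_left h11 hKpos.le
      have hm2 := mul_le_mul_of_nonneg_left h1m1 hKpos.le
      rw [ea1, ea2] at hm1 hm2
      have hKK : K * (1 / K) = 1 := by field_simp
      have hc2 : 0 ≤ K ^ 2 - 1 + K * a12 := by nlinarith [hm1, hKK]
      have hc1 : 0 ≤ K ^ 2 - 1 - K * a12 := by nlinarith [hm2, hKK]
      have hz : (K - a11) * (K - a22) = 0 := by rw [e1, zero_mul]
      rw [hz]
      nlinarith [mul_nonneg hc1 hc2, ha12sq, sq_nonneg K, hKpos]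
    · nlinarith [hA, hB, hpos]
  set t := a11 + a22 with ht
  have hKt : K * t ≤ K ^ 2 + 1 := by nlinarith [hkey]
  have ht2 : 2 ≤ t := by nlinarith [sq_nonneg (a22 - a11), sq_nonneg a12]
  have hd : (0:ℝ) < 2 + t := by linarith
  have hden : (1 + a11) * (1 + a22) - a12 ^ 2 = 2 + t := by
    rw [ht]; linear_combination hdet
  rw [hden]
  constructor
  · have hzeq : ((a22 : ℂ) - (a11 : ℂ) - 2 * Complex.I * (a12 : ℂ)) =
        Complex.mk (a22 - a11) (-(2 * a12)) := by
      apply Complex.ext <;> simp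
    rw [norm_div, hzeq, Complex.norm_def, Complex.normSq_mk]
    have hns : (a22 - a11) * (a22 - a11) + -(2 * a12) * -(2 * a12) = t ^ 2 - 4 := by
      rw [ht]; linear_combination (-4 : ℝ) * hdet
    rw [hns, Complex.norm_real, Real.norm_eq_abs, abs_of_pos hd]
    have hR : 0 ≤ (K - 1) / (K + 1) * (2 + t) :=
      mul_nonneg (div_nonneg (by linarith) (by linarith)) hd.le
    have hsq : t ^ 2 - 4 ≤ ((K - 1) / (K + 1) * (2 + t)) ^ 2 := by
      rw [mul_pow, div_pow, div_mul_eq_mul_div, le_div_iff₀ (by positivity)]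
      nlinarith [mul_nonneg (by nlinarith : (0:ℝ) ≤ K ^ 2 + 1 - K * t) hd.le]
    have hle := Real.sqrt_le_sqrt hsq
    rw [Real.sqrt_sq hR] at hle
    rw [div_le_iff₀ hd]
    linarith
  · rw [div_lt_one (by linarith)]; linarith
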